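/- arXiv:1804.01480 — 6 statements merged into one kernel-verified Lean document; each statement's English description precedes it below -/
import Mathlib

section
/- Assume additionally that there is an element ρ ∈ V with 2·B(α_j, ρ) = B(α_j, α_j) for every j = 1,…,m. Then for every t ∈ ℂ with t ≠ z_i for all i and t ≠ w_j for all j, one has (1/2)·B(u(t), u(t)) + B(ρ, u′(t)) = Σ_{i=1}^N (1/2)·B(λ_i, λ_i + 2ρ)·(t − z_i)^{−2} + Σ_{i=1}^N F_i·(t − z_i)^{−1} + Σ_{j=1}^m G_j·(t − w_j)^{−1}. (This is the partial-fraction identity of Theorem 4.4: h∨ times the coefficient of p₁ in any quasi-canonical form of the affine oper underlying the Miura oper d + (p₋₁ + u(z))dz equals the left-hand side; its double-pole coefficients are ½(λ_i|λ_i + 2ρ) and its residues are the partial derivatives ∂Φ/∂z_i = F_i and ∂Φ/∂w_j = G_j of the master function.) -/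
/-! Put all poles into one family: `p = Sum.elim z w`, `v = Sum.elim (-λ) α`, so that
`u t = ∑ₐ (t - pₐ)⁻¹ • vₐ` and `u′ t = -∑ₐ (t - pₐ)⁻² • vₐ`. Expanding `B(u, u)` and splitting
each off-diagonal product by `(t - p)⁻¹ (t - q)⁻¹ = ((t - p)⁻¹ - (t - q)⁻¹) / (p - q)`, the
symmetry of `B` collects the residue at `pₐ` into `∑_{b ≠ a} B(vₐ, v_b) / (pₐ - p_b)`, which is
`F i` or `G j`. The double pole at `pₐ` carries `½ B(vₐ, vₐ - 2ρ)`: this is `½ B(λᵢ, λᵢ + 2ρ)`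
at `zᵢ` and vanishes at `wⱼ` by the condition on `ρ`. -/

open Finset

theorem Fintype.sum_erase_inl {α β M : Type*} [Fintype α] [Fintype β] [DecidableEq α]
    [DecidableEq β] [AddCancelCommMonoid M] (f : α ⊕ β → M) (i : α) :
    ∑ b ∈ univ.erase (Sum.inl i), f b
      = ∑ k ∈ univ.erase i, f (Sum.inl k) + ∑ j, f (Sum.inr j) := by
  rw [← add_left_inj (f (Sum.inl i)), sum_erase_add _ _ (mem_univ _), Fintype.sum_sum_type,
    add_right_comm, sum_erase_add _ _ (mem_univ _)]

theorem Fintype.sum_erase_inr {α β M : Type*} [Fintype α] [Fintype β] [DecidableEq α]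
    [DecidableEq β] [AddCancelCommMonoid M] (f : α ⊕ β → M) (j : β) :
    ∑ b ∈ univ.erase (Sum.inr j), f b
      = ∑ i, f (Sum.inl i) + ∑ k ∈ univ.erase j, f (Sum.inr k) := by
  rw [← add_left_inj (f (Sum.inr j)), sum_erase_add _ _ (mem_univ _), Fintype.sum_sum_type,
    add_assoc, sum_erase_add _ _ (mem_univ _)]

section

variable {ι : Type*} [Fintype ι] [DecidableEq ι]

theorem Finset.sum_sum_erase_comm {M : Type*} [AddCommMonoid M] (f : ι → ι → M) :
    ∑ a, ∑ b ∈ univ.erase a, f a b = ∑ b, ∑ a ∈ univ.erase b, f a b :=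
  Finset.sum_comm' fun a b => by simp [ne_comm]

theorem inv_sub_mul_inv_sub {K : Type*} [Field K] {t p q : K} (hp : t ≠ p) (hq : t ≠ q)
    (hpq : p ≠ q) :
    (t - p)⁻¹ * (t - q)⁻¹ = (t - p)⁻¹ / (p - q) + (t - q)⁻¹ / (q - p) := by
  have := sub_ne_zero.2 hp
  have := sub_ne_zero.2 hq
  have := sub_ne_zero.2 hpq
  have := sub_ne_zero.2 hpq.symm
  field_simp
  ring

theorem sum_sum_inv_sub_mul_inv_sub {K : Type*} [Field K] {p : ι → K} (hp : Function.Injective p)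
    {t : K} (ht : ∀ a, t ≠ p a) (c : ι → ι → K) (hc : ∀ a b, c a b = c b a) :
    ∑ a, ∑ b, (t - p a)⁻¹ * (t - p b)⁻¹ * c a b
      = ∑ a, ((t - p a) ^ 2)⁻¹ * c a a
        + 2 * ∑ a, (∑ b ∈ univ.erase a, c a b / (p a - p b)) * (t - p a)⁻¹ := by
  set r : ι → ι → K := fun a b => (t - p a)⁻¹ / (p a - p b) * c a b
  have off_diag : ∑ a, ∑ b ∈ univ.erase a, (t - p a)⁻¹ * (t - p b)⁻¹ * c a b
      = 2 * ∑ a, ∑ b ∈ univ.erase a, r a b := by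
    calc ∑ a, ∑ b ∈ univ.erase a, (t - p a)⁻¹ * (t - p b)⁻¹ * c a b
        = ∑ a, ∑ b ∈ univ.erase a, (r a b + r b a) := by
          refine sum_congr rfl fun a _ => sum_congr rfl fun b hb => ?_
          rw [inv_sub_mul_inv_sub (ht a) (ht b) (hp.ne (ne_of_mem_erase hb).symm)]
          simp only [r, hc b a]
          ring
      _ = 2 * ∑ a, ∑ b ∈ univ.erase a, r a b := by
          simp_rw [Finset.sum_add_distrib]
          rw [Finset.sum_sum_erase_comm (fun a b => r b a)]
          ring
  calc ∑ a, ∑ b, (t - p a)⁻¹ * (t - p b)⁻¹ * c a b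
      = ∑ a, (t - p a)⁻¹ * (t - p a)⁻¹ * c a a
          + ∑ a, ∑ b ∈ univ.erase a, (t - p a)⁻¹ * (t - p b)⁻¹ * c a b := by
        rw [← Finset.sum_add_distrib]
        exact sum_congr rfl fun a _ =>
          (add_sum_erase univ (fun b => (t - p a)⁻¹ * (t - p b)⁻¹ * c a b) (mem_univ a)).symm
    _ = _ := by
        simp_rw [off_diag, r, Finset.sum_mul, div_eq_mul_inv, sq, mul_inv]
        congr 2
        refine sum_congr rfl fun a _ => sum_congr rfl fun b _ => ?_
        ring

theorem half_apply_self_add_apply_deriv_eq_partialFractions {V : Type*} [AddCommGroup V]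
    [Module ℂ V] (B : V →ₗ[ℂ] V →ₗ[ℂ] ℂ) (hB : ∀ x y, B x y = B y x)
    {p : ι → ℂ} (hp : Function.Injective p) {t : ℂ} (ht : ∀ a, t ≠ p a) (v : ι → V) (ρ : V) :
    (1/2 : ℂ) * B (∑ a, (t - p a)⁻¹ • v a) (∑ a, (t - p a)⁻¹ • v a)
        + B ρ (-∑ a, ((t - p a) ^ 2)⁻¹ • v a)
      = ∑ a, (1/2 : ℂ) * B (v a) (v a - (2 : ℂ) • ρ) * ((t - p a) ^ 2)⁻¹
        + ∑ a, (∑ b ∈ univ.erase a, B (v a) (v b) / (p a - p b)) * (t - p a)⁻¹ := by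
  have expand : B (∑ a, (t - p a)⁻¹ • v a) (∑ a, (t - p a)⁻¹ • v a)
      = ∑ a, ∑ b, (t - p a)⁻¹ * (t - p b)⁻¹ * B (v a) (v b) := by
    simp only [map_sum, map_smul, LinearMap.sum_apply, LinearMap.smul_apply, smul_eq_mul,
      Finset.mul_sum, mul_assoc]
    rw [Finset.sum_comm]
    exact sum_congr rfl fun a _ => sum_congr rfl fun b _ => mul_left_comm _ _ _
  rw [expand, sum_sum_inv_sub_mul_inv_sub hp ht _ fun a b => hB _ _]
  simp only [map_neg, map_sum, map_smul, map_sub, smul_eq_mul, Finset.mul_sum,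
    ← Finset.sum_add_distrib, ← Finset.sum_neg_distrib]
  refine sum_congr rfl fun a _ => ?_
  rw [hB ρ]
  ring

end

/-- The partial-fraction identity of Theorem 4.4: with a vector `ρ`
satisfying `2·B(α_j, ρ) = B(α_j, α_j)`, the quantity `½·B(u(t),u(t)) + B(ρ,u′(t))`
(which equals `h∨` times the coefficient of `p₁` in any quasi-canonical form of the
affine oper underlying the Miura oper `d + (p₋₁ + u(z))dz`) has double-pole
coefficients `½(λ_i|λ_i+2ρ)` at the `z_i`, residues `F_i = ∂Φ/∂z_i` at the `z_i`
and residues `G_j = ∂Φ/∂w_j` at the Bethe roots `w_j`. -/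
theorem statement0 {V : Type*} [AddCommGroup V] [Module ℂ V]
    (B : V →ₗ[ℂ] V →ₗ[ℂ] ℂ) (hBsymm : ∀ x y, B x y = B y x)
    (N m : ℕ) (lam : Fin N → V) (alp : Fin m → V)
    (z : Fin N → ℂ) (w : Fin m → ℂ)
    (hz : Function.Injective z) (hw : Function.Injective w)
    (hzw : ∀ i j, z i ≠ w j)
    (ρ : V) (hρ : ∀ j, 2 * B (alp j) ρ = B (alp j) (alp j))
    (u u' : ℂ → V)
    (hu : ∀ t, u t = -∑ i, (t - z i)⁻¹ • lam i + ∑ j, (t - w j)⁻¹ • alp j)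
    (hu' : ∀ t, u' t = ∑ i, ((t - z i) ^ 2)⁻¹ • lam i - ∑ j, ((t - w j) ^ 2)⁻¹ • alp j)
    (F : Fin N → ℂ)
    (hF : ∀ i, F i = ∑ k ∈ univ.erase i, B (lam i) (lam k) / (z i - z k)
        - ∑ j, B (lam i) (alp j) / (z i - w j))
    (G : Fin m → ℂ)
    (hG : ∀ j, G j = -∑ i, B (lam i) (alp j) / (w j - z i)
        + ∑ k ∈ univ.erase j, B (alp k) (alp j) / (w j - w k)) :
    ∀ t : ℂ, (∀ i, t ≠ z i) → (∀ j, t ≠ w j) →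
      (1/2 : ℂ) * B (u t) (u t) + B ρ (u' t)
        = ∑ i, (1/2 : ℂ) * B (lam i) (lam i + (2 : ℂ) • ρ) * ((t - z i) ^ 2)⁻¹
          + ∑ i, F i * (t - z i)⁻¹
          + ∑ j, G j * (t - w j)⁻¹ := by
  intro t htz htw
  set p : Fin N ⊕ Fin m → ℂ := Sum.elim z w
  set v : Fin N ⊕ Fin m → V := Sum.elim (-lam) alp
  have hut : u t = ∑ a, (t - p a)⁻¹ • v a := by
    simp [hu, Fintype.sum_sum_type, p, v]
  have hu't : u' t = -∑ a, ((t - p a) ^ 2)⁻¹ • v a := by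
    simp [hu', Fintype.sum_sum_type, p, v, sub_eq_neg_add]
  have double_z : ∀ i, (1/2 : ℂ) * B (v (.inl i)) (v (.inl i) - (2 : ℂ) • ρ)
      = (1/2 : ℂ) * B (lam i) (lam i + (2 : ℂ) • ρ) := fun i => by
    simp [v, add_comm]
  have double_w : ∀ j, (1/2 : ℂ) * B (v (.inr j)) (v (.inr j) - (2 : ℂ) • ρ) = 0 := fun j => by
    simp [v, ← hρ j]
  have residue_z : ∀ i,
      ∑ b ∈ univ.erase (.inl i), B (v (.inl i)) (v b) / (z i - p b) = F i := fun i => by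
    rw [Fintype.sum_erase_inl, hF]
    simp [v, p, neg_div, sub_eq_add_neg]
  have residue_w : ∀ j,
      ∑ b ∈ univ.erase (.inr j), B (v (.inr j)) (v b) / (w j - p b) = G j := fun j => by
    rw [Fintype.sum_erase_inr, hG]
    simp [v, p, neg_div, hBsymm (alp j)]
  rw [hut, hu't, half_apply_self_add_apply_deriv_eq_partialFractions B hBsymm
    (hz.sumElim hw hzw) (Sum.forall.2 ⟨htz, htw⟩), Fintype.sum_sum_type, Fintype.sum_sum_type]
  simp only [p, Sum.elim_inl, Sum.elim_inr, double_z, double_w, residue_z, residue_w, zero_mul,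
    sum_const_zero, add_zero, add_assoc]
end

section
/- Let L be a Lie algebra over ℂ, let ρ, p, q ∈ L and r ∈ ℂ satisfy [ρ, p] = r·p and [p, [p, q]] = 0, let a : ℂ → L satisfy [p, a(t)] = 0 for all t, let φ : ℂ → ℂ, let h ∈ ℂ be nonzero, and let f : ℂ → ℂ be differentiable. Writing A(t) := q − (φ(t)/h)·ρ + a(t), for every t ∈ ℂ one has A(t) + [f(t)·p, A(t)] + (1/2)·[f(t)·p, [f(t)·p, A(t)]] − f′(t)·p = q − (φ(t)/h)·ρ + a(t) + f(t)·[p, q] + ((r·φ(t)/h)·f(t) − f′(t))·p. (This is the residual gauge computation of Theorem 3.2 and Proposition 3.3: gauge transforming a quasi-canonical connection d + (p₋₁ − (φ/h∨)ρ + Σ_j v_j p_j)dz by exp(f(z)·p_r) sends v_r ↦ v_r − f′ + (rφ/h∨)f when [p_r, p₋₁] = 0, and in the case r = 1, where [p₁, p₋₁] = δ, additionally shifts the coefficient of δ by f.) -/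
/-- The residual gauge computation of Theorem 3.2 and
Proposition 3.3: gauge transforming the quasi-canonical connection coefficient
`A(t) = q - (φ(t)/h)·ρ + a(t)` by `exp(f(t)·p)` (with `[ρ,p] = r·p`,
`[p,[p,q]] = 0` and `[p, a(t)] = 0`) yields
`q - (φ(t)/h)·ρ + a(t) + f(t)·[p,q] + ((rφ(t)/h)·f(t) - f′(t))·p`. -/
theorem statement2 {L : Type*} [LieRing L] [LieAlgebra ℂ L]
    (ρ p q : L) (r : ℂ) (hρp : ⁅ρ, p⁆ = r • p) (hppq : ⁅p, ⁅p, q⁆⁆ = 0)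
    (a : ℂ → L) (ha : ∀ t, ⁅p, a t⁆ = 0)
    (φ : ℂ → ℂ) (h : ℂ) (hh : h ≠ 0)
    (f f' : ℂ → ℂ) (hf : ∀ t, HasDerivAt f (f' t) t)
    (A : ℂ → L) (hA : ∀ t, A t = q - (φ t / h) • ρ + a t) :
    ∀ t : ℂ,
      A t + ⁅f t • p, A t⁆ + (1/2 : ℂ) • ⁅f t • p, ⁅f t • p, A t⁆⁆ - f' t • p
        = q - (φ t / h) • ρ + a t + f t • ⁅p, q⁆
          + ((r * φ t / h) * f t - f' t) • p := by
  intro t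
  have hpρ : ⁅p, ρ⁆ = -(r • p) := by
    rw [← lie_skew, hρp]
  have hpA : ⁅p, A t⁆ = ⁅p, q⁆ + (φ t / h * r) • p := by
    rw [hA, lie_add, lie_sub, ha, lie_smul, hpρ, add_zero, smul_neg, sub_neg_eq_add,
      smul_smul]
  have hppA : ⁅p, ⁅p, A t⁆⁆ = 0 := by
    rw [hpA, lie_add, hppq, lie_smul, lie_self, smul_zero, add_zero]
  simp only [smul_lie, lie_smul, hppA, smul_zero, add_zero]
  rw [hpA, hA]
  rw [smul_add, smul_smul, sub_smul]
  have : f t * (φ t / h * r) = r * φ t / h * f t := by ring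
  rw [this]
  abel
end

section
/- Let U ⊆ ℂ be open, let φ : U → ℂ be continuous, let g : U → ℂ be complex differentiable on U with derivative g′, let c ∈ ℂ, and let γ : ℝ → ℂ be continuously differentiable on [0,1] with γ(t) ∈ U for all t ∈ [0,1] and γ(1) = γ(0). Suppose Q : ℝ → ℂ is differentiable on [0,1] with Q′(t) = −c·φ(γ(t))·γ′(t)·Q(t) for all t ∈ [0,1] and Q(1) = Q(0). Then ∫_0^1 Q(t)·(g′(γ(t)) − c·φ(γ(t))·g(γ(t)))·γ′(t) dt = 0. Consequently, for any v : U → ℂ, the hypergeometric integral ∫_0^1 Q(t)·v(γ(t))·γ′(t) dt is unchanged when v is replaced by v − g′ + c·φ·g. (This is Corollary 3.5 of the paper: the integral I_r^γ = ∫_γ P(z)^{−r/h∨} v_r(z) dz over a closed contour γ along which P^{−r/h∨} has a single-valued branch is invariant under the residual gauge transformations v_r ↦ v_r − g′ + (rφ/h∨)g of the quasi-canonical form, so it depends only on the affine oper.) -/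
/-!
Along the contour, `Q` satisfies `Q' = -c (φ ∘ γ) γ' Q`, so by the product and chain rules
`(Q · (g ∘ γ))' = Q · (g' ∘ γ - c (φ ∘ γ)(g ∘ γ)) · γ'`. The integral of the twisted derivative is
therefore the increment of `Q · (g ∘ γ)` over `[0, 1]`, which vanishes because both `Q` and `γ`
take the same values at the two endpoints.
-/

open Set MeasureTheory

theorem continuousOn_of_forall_hasDerivAt_of_isOpen {U : Set ℂ} (hU : IsOpen U) {g g' : ℂ → ℂ}
    (hg : ∀ x ∈ U, HasDerivAt g (g' x) x) : ContinuousOn g' U := by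
  have hdiff : DifferentiableOn ℂ g U := fun x hx =>
    (hg x hx).differentiableAt.differentiableWithinAt
  exact (hdiff.deriv hU).continuousOn.congr fun x hx => (hg x hx).deriv.symm

namespace intervalIntegral

variable {E : Type*} [NormedAddCommGroup E] [NormedSpace ℝ E]

theorem integral_eq_sub_of_hasDerivWithinAt_Icc [CompleteSpace E] {f f' : ℝ → E} {a b : ℝ}
    (hab : a ≤ b) (hderiv : ∀ t ∈ Icc a b, HasDerivWithinAt f (f' t) (Icc a b) t)
    (hint : IntervalIntegrable f' volume a b) : ∫ t in a..b, f' t = f b - f a :=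
  integral_eq_sub_of_hasDerivAt_of_le hab (fun t ht => (hderiv t ht).continuousWithinAt)
    (fun t ht => (hderiv t (Ioo_subset_Icc_self ht)).hasDerivAt (Icc_mem_nhds ht.1 ht.2)) hint

theorem integral_sub_eq_of_integral_eq_zero {f g : ℝ → E} {a b : ℝ} {μ : Measure ℝ}
    (hg : IntervalIntegrable g μ a b) (hg0 : ∫ t in a..b, g t ∂μ = 0) :
    ∫ t in a..b, f t - g t ∂μ = ∫ t in a..b, f t ∂μ := by
  by_cases hf : IntervalIntegrable f μ a b
  · rw [integral_sub hf hg, hg0, sub_zero]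
  · have hfg : ¬ IntervalIntegrable (fun t => f t - g t) μ a b := fun hfg =>
      hf <| by simpa using hfg.add hg
    rw [integral_undef hf, integral_undef hfg]

end intervalIntegral

section TwistedDerivative

variable {φ g g' : ℂ → ℂ} {c : ℂ} {γ γ' Q : ℝ → ℂ}

theorem hasDerivWithinAt_mul_comp_of_twisted {s : Set ℝ} {t : ℝ}
    (hg : HasDerivAt g (g' (γ t)) (γ t)) (hγ : HasDerivWithinAt γ (γ' t) s t)
    (hQ : HasDerivWithinAt Q (-c * φ (γ t) * γ' t * Q t) s t) :
    HasDerivWithinAt (fun t => Q t * g (γ t))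
      (Q t * (g' (γ t) - c * φ (γ t) * g (γ t)) * γ' t) s t :=
  (hQ.mul (hg.comp_hasDerivWithinAt t hγ)).congr_deriv (by rw [Function.comp_apply]; ring)

theorem continuousOn_mul_twisted_deriv_comp {U : Set ℂ} {s : Set ℝ} (hU : IsOpen U)
    (hφ : ContinuousOn φ U) (hg : ∀ x ∈ U, HasDerivAt g (g' x) x) (hγc : ContinuousOn γ s)
    (hγ'c : ContinuousOn γ' s) (hγU : MapsTo γ s U) (hQc : ContinuousOn Q s) :
    ContinuousOn (fun t => Q t * (g' (γ t) - c * φ (γ t) * g (γ t)) * γ' t) s := by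
  have hgc : ContinuousOn g U := fun x hx => (hg x hx).continuousAt.continuousWithinAt
  have hg'c : ContinuousOn g' U := continuousOn_of_forall_hasDerivAt_of_isOpen hU hg
  exact (hQc.mul ((hg'c.comp hγc hγU).sub
    ((continuousOn_const.mul (hφ.comp hγc hγU)).mul (hgc.comp hγc hγU)))).mul hγ'c

theorem integral_mul_twisted_deriv_comp_eq_sub {U : Set ℂ} {a b : ℝ} (hab : a ≤ b)
    (hU : IsOpen U) (hφ : ContinuousOn φ U) (hg : ∀ x ∈ U, HasDerivAt g (g' x) x)
    (hγd : ∀ t ∈ Icc a b, HasDerivWithinAt γ (γ' t) (Icc a b) t)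
    (hγ'c : ContinuousOn γ' (Icc a b)) (hγU : MapsTo γ (Icc a b) U)
    (hQ : ∀ t ∈ Icc a b, HasDerivWithinAt Q (-c * φ (γ t) * γ' t * Q t) (Icc a b) t) :
    ∫ t in a..b, Q t * (g' (γ t) - c * φ (γ t) * g (γ t)) * γ' t
      = Q b * g (γ b) - Q a * g (γ a) := by
  have hγc : ContinuousOn γ (Icc a b) := fun t ht => (hγd t ht).continuousWithinAt
  have hQc : ContinuousOn Q (Icc a b) := fun t ht => (hQ t ht).continuousWithinAt
  exact intervalIntegral.integral_eq_sub_of_hasDerivWithinAt_Icc hab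
    (fun t ht => hasDerivWithinAt_mul_comp_of_twisted (hg _ (hγU ht)) (hγd t ht) (hQ t ht))
    ((continuousOn_mul_twisted_deriv_comp hU hφ hg hγc hγ'c hγU hQc).intervalIntegrable_of_Icc
      hab)

end TwistedDerivative

/-- (Corollary 3.5.) If `Q` is a single-valued branch of
`P^{-c}` along the closed contour `γ` (i.e. `Q′ = -c·(φ∘γ)·γ′·Q` with
`Q(1) = Q(0)`), then the integral of the twisted derivative
`g′ - c·φ·g` against `Q` along `γ` vanishes; consequently the hypergeometric
integral `∫ Q·(v∘γ)·γ′` is unchanged when `v` is replaced by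
`v - g′ + c·φ·g`, so it depends only on the affine oper. -/
theorem statement3 (U : Set ℂ) (hU : IsOpen U)
    (φ : ℂ → ℂ) (hφ : ContinuousOn φ U)
    (g g' : ℂ → ℂ) (hg : ∀ x ∈ U, HasDerivAt g (g' x) x)
    (c : ℂ)
    (γ γ' : ℝ → ℂ)
    (hγd : ∀ t ∈ Set.Icc (0:ℝ) 1, HasDerivWithinAt γ (γ' t) (Set.Icc 0 1) t)
    (hγ'c : ContinuousOn γ' (Set.Icc 0 1))
    (hγU : ∀ t ∈ Set.Icc (0:ℝ) 1, γ t ∈ U)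
    (hclosed : γ 1 = γ 0)
    (Q : ℝ → ℂ)
    (hQ : ∀ t ∈ Set.Icc (0:ℝ) 1,
      HasDerivWithinAt Q (-c * φ (γ t) * γ' t * Q t) (Set.Icc 0 1) t)
    (hQper : Q 1 = Q 0) :
    (∫ t in (0:ℝ)..1, Q t * (g' (γ t) - c * φ (γ t) * g (γ t)) * γ' t) = 0
    ∧ ∀ v : ℂ → ℂ,
        (∫ t in (0:ℝ)..1,
            Q t * (v (γ t) - g' (γ t) + c * φ (γ t) * g (γ t)) * γ' t)
          = ∫ t in (0:ℝ)..1, Q t * v (γ t) * γ' t := by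
  have hzero : ∫ t in (0:ℝ)..1, Q t * (g' (γ t) - c * φ (γ t) * g (γ t)) * γ' t = 0 := by
    rw [integral_mul_twisted_deriv_comp_eq_sub zero_le_one hU hφ hg hγd hγ'c hγU hQ,
      hclosed, hQper, sub_self]
  have hint : IntervalIntegrable
      (fun t => Q t * (g' (γ t) - c * φ (γ t) * g (γ t)) * γ' t) volume 0 1 :=
    (continuousOn_mul_twisted_deriv_comp hU hφ hg (fun t ht => (hγd t ht).continuousWithinAt)
      hγ'c hγU (fun t ht => (hQ t ht).continuousWithinAt)).intervalIntegrable_of_Icc zero_le_one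
  refine ⟨hzero, fun v => ?_⟩
  calc ∫ t in (0:ℝ)..1, Q t * (v (γ t) - g' (γ t) + c * φ (γ t) * g (γ t)) * γ' t
      = ∫ t in (0:ℝ)..1,
          Q t * v (γ t) * γ' t - Q t * (g' (γ t) - c * φ (γ t) * g (γ t)) * γ' t := by
        congr 1; ext t; ring
    _ = ∫ t in (0:ℝ)..1, Q t * v (γ t) * γ' t :=
        intervalIntegral.integral_sub_eq_of_integral_eq_zero hint hzero
end

section
/- Let L be a Lie algebra over ℂ and let e, q, a ∈ L satisfy [e, q] = a and [e, a] = −2·e. Let x ∈ ℂ, let r : ℂ → L and c : ℂ → ℂ satisfy [e, r(t)] = −c(t)·e for all t, and set u(t) := (t − x)^{−1}·a + r(t). Then for every t ∈ ℂ with t ≠ x: (q + u(t)) − (t − x)^{−1}·[e, q + u(t)] + (1/2)·(t − x)^{−2}·[e, [e, q + u(t)]] − (t − x)^{−2}·e = q + r(t) + (c(t)/(t − x))·e. (This is the gauge computation of Proposition 4.2: the left-hand side is the connection coefficient of the gauge transform of the Miura oper d + (q + u(t))dt by g = exp(−(t − x)^{−1}·e), namely Ad_g(q + u(t)) − (∂_t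 g)g^{−1}; it is regular at t = x if and only if c(x) = 0, which is the Bethe equation ⟨r(x), α̌_i⟩ = 0 at the Bethe root x.) -/
/-- The gauge computation of Proposition 4.2: with `[e,q] = a`,
`[e,a] = -2e`, `[e,r(t)] = -c(t)·e` and `u(t) = (t-x)⁻¹·a + r(t)`, the gauge
transform of the Miura connection coefficient `q + u(t)` by
`g = exp(-(t-x)⁻¹·e)` equals `q + r(t) + (c(t)/(t-x))·e`; it is regular at
`t = x` if and only if the Bethe equation `c(x) = 0` holds. -/
theorem statement4 {L : Type*} [LieRing L] [LieAlgebra ℂ L]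
    (e q a : L) (heq : ⁅e, q⁆ = a) (hea : ⁅e, a⁆ = (-2 : ℂ) • e)
    (x : ℂ) (r : ℂ → L) (c : ℂ → ℂ) (hr : ∀ t, ⁅e, r t⁆ = -(c t) • e)
    (u : ℂ → L) (hu : ∀ t, u t = (t - x)⁻¹ • a + r t) :
    ∀ t : ℂ, t ≠ x →
      (q + u t) - (t - x)⁻¹ • ⁅e, q + u t⁆
        + ((1/2 : ℂ) * ((t - x) ^ 2)⁻¹) • ⁅e, ⁅e, q + u t⁆⁆
        - ((t - x) ^ 2)⁻¹ • e
        = q + r t + (c t / (t - x)) • e := by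
  intro t ht
  have hx : t - x ≠ 0 := sub_ne_zero.mpr ht
  have h1 : ⁅e, q + u t⁆ = a + ((t - x)⁻¹ * (-2) - c t) • e := by
    rw [hu, lie_add, lie_add, heq, lie_smul, hea, hr, smul_smul, sub_smul, neg_smul]
    abel
  have h2 : ⁅e, ⁅e, q + u t⁆⁆ = (-2 : ℂ) • e := by
    rw [h1, lie_add, lie_smul, lie_self, smul_zero, add_zero, hea]
  rw [h2, h1, hu]
  have hp : ((t - x) ^ 2)⁻¹ = (t - x)⁻¹ * (t - x)⁻¹ := by
    rw [sq, mul_inv]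
  have hd : c t / (t - x) = c t * (t - x)⁻¹ := div_eq_mul_inv _ _
  rw [hp, hd]
  generalize (t - x)⁻¹ = s
  match_scalars <;> ring
end

section
/- Assume additionally that there is an element ρ ∈ V with 2·B(α_j, ρ) = B(α_j, α_j) for every j = 1,…,m, and fix j₀ ∈ {1,…,m}. Then the function t ↦ (1/2)·B(u(t), u(t)) + B(ρ, u′(t)), considered on punctured neighbourhoods of w_{j₀} avoiding all z_i and all w_k with k ≠ j₀, has a finite limit as t → w_{j₀} (t ≠ w_{j₀}) if and only if G_{j₀} = 0, i.e. if and only if the j₀-th Bethe equation −Σ_{i=1}^N B(λ_i, α_{j₀})/(w_{j₀} − z_i) + Σ_{k≠j₀} B(α_k, α_{j₀})/(w_{j₀} − w_k) = 0 holds. (This is the coefficient-of-p₁ manifestation of Corollary 4.3: the affine oper underlying the Miura oper d + (p₋₁ + u(z))dz is regular at the Bethe root w_{j₀} precisely when the Bethe equation holds there.) -/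
open Finset Filter Topology

lemma auxB {V : Type*} [AddCommGroup V] [Module ℂ V] (B : V →ₗ[ℂ] V →ₗ[ℂ] ℂ)
    {ι κ : Type*} (s : Finset ι) (r : Finset κ) (c : ι → ℂ → ℂ) (d : κ → ℂ → ℂ)
    (x : ι → V) (y : κ → V) (w₀ : ℂ)
    (hc : ∀ i ∈ s, ContinuousAt (c i) w₀) (hd : ∀ k ∈ r, ContinuousAt (d k) w₀) :
    ContinuousAt (fun t => B (∑ i ∈ s, c i t • x i) (∑ k ∈ r, d k t • y k)) w₀ := by
  have key : (fun t => B (∑ i ∈ s, c i t • x i) (∑ k ∈ r, d k t • y k))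
      = fun t => ∑ i ∈ s, ∑ k ∈ r, c i t * d k t * B (x i) (y k) := by
    funext t
    simp only [map_sum, map_smul, LinearMap.sum_apply, LinearMap.smul_apply, smul_eq_mul,
      Finset.mul_sum]
    rw [Finset.sum_comm]
    exact Finset.sum_congr rfl fun i _ => Finset.sum_congr rfl fun k _ => by ring
  rw [key]
  exact tendsto_finset_sum _ fun i hi => tendsto_finset_sum _ fun k hk =>
    (((hc i hi).mul (hd k hk)).mul tendsto_const_nhds)

lemma auxB1 {V : Type*} [AddCommGroup V] [Module ℂ V] (B : V →ₗ[ℂ] V →ₗ[ℂ] ℂ)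
    {κ : Type*} (y : V) (r : Finset κ) (d : κ → ℂ → ℂ) (x : κ → V) (w₀ : ℂ)
    (hd : ∀ k ∈ r, ContinuousAt (d k) w₀) :
    ContinuousAt (fun t => B y (∑ k ∈ r, d k t • x k)) w₀ := by
  have key : (fun t => B y (∑ k ∈ r, d k t • x k))
      = fun t => ∑ k ∈ r, d k t * B y (x k) := by
    funext t
    rw [map_sum]
    exact Finset.sum_congr rfl fun k _ => by rw [map_smul, smul_eq_mul]
  rw [key]
  exact tendsto_finset_sum _ fun k hk => (hd k hk).mul tendsto_const_nhds

/-- (Corollary 4.3, coefficient-of-`p₁` manifestation.) The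
function `t ↦ ½·B(u(t),u(t)) + B(ρ,u′(t))`, on punctured neighbourhoods of the
Bethe root `w_{j₀}`, has a finite limit as `t → w_{j₀}` if and only if the
`j₀`-th Bethe equation `G_{j₀} = 0` holds. -/
theorem statement5 {V : Type*} [AddCommGroup V] [Module ℂ V]
    (B : V →ₗ[ℂ] V →ₗ[ℂ] ℂ) (hBsymm : ∀ x y, B x y = B y x)
    (N m : ℕ) (lam : Fin N → V) (alp : Fin m → V)
    (z : Fin N → ℂ) (w : Fin m → ℂ)
    (hz : Function.Injective z) (hw : Function.Injective w)
    (hzw : ∀ i j, z i ≠ w j)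
    (ρ : V) (hρ : ∀ j, 2 * B (alp j) ρ = B (alp j) (alp j))
    (u u' : ℂ → V)
    (hu : ∀ t, u t = -∑ i, (t - z i)⁻¹ • lam i + ∑ j, (t - w j)⁻¹ • alp j)
    (hu' : ∀ t, u' t = ∑ i, ((t - z i) ^ 2)⁻¹ • lam i - ∑ j, ((t - w j) ^ 2)⁻¹ • alp j)
    (G : Fin m → ℂ)
    (hG : ∀ j, G j = -∑ i, B (lam i) (alp j) / (w j - z i)
        + ∑ k ∈ univ.erase j, B (alp k) (alp j) / (w j - w k))
    (j₀ : Fin m) :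
    (∃ L : ℂ, Tendsto (fun t => (1/2 : ℂ) * B (u t) (u t) + B ρ (u' t))
        (𝓝[≠] (w j₀)) (𝓝 L)) ↔ G j₀ = 0 := by
  have hwz : ∀ i : Fin N, w j₀ - z i ≠ 0 := fun i => sub_ne_zero.mpr (Ne.symm (hzw i j₀))
  have hww : ∀ k ∈ univ.erase j₀, w j₀ - w k ≠ 0 := fun k hk =>
    sub_ne_zero.mpr fun hc => (Finset.mem_erase.mp hk).1 (hw hc).symm
  have c1q : ∀ i : Fin N, ContinuousAt (fun t : ℂ => ((t - z i) * (w j₀ - z i))⁻¹) (w j₀) :=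
    fun i => (((continuous_id.sub continuous_const).mul continuous_const).continuousAt).inv₀
      (mul_ne_zero (hwz i) (hwz i))
  have c2q : ∀ k ∈ univ.erase j₀,
      ContinuousAt (fun t : ℂ => ((t - w k) * (w j₀ - w k))⁻¹) (w j₀) :=
    fun k hk => (((continuous_id.sub continuous_const).mul continuous_const).continuousAt).inv₀
      (mul_ne_zero (hww k hk) (hww k hk))
  have c1s : ∀ i : Fin N, ContinuousAt (fun t : ℂ => ((t - z i) ^ 2)⁻¹) (w j₀) :=
    fun i => (((continuous_id.sub continuous_const).pow 2).continuousAt).inv₀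
      (pow_ne_zero 2 (hwz i))
  have c2s : ∀ k ∈ univ.erase j₀, ContinuousAt (fun t : ℂ => ((t - w k) ^ 2)⁻¹) (w j₀) :=
    fun k hk => (((continuous_id.sub continuous_const).pow 2).continuousAt).inv₀
      (pow_ne_zero 2 (hww k hk))
  have c1 : ∀ i : Fin N, ContinuousAt (fun t : ℂ => (t - z i)⁻¹) (w j₀) :=
    fun i => ((continuous_id.sub continuous_const).continuousAt).inv₀ (hwz i)
  have c1n : ∀ i : Fin N, ContinuousAt (fun t : ℂ => -(t - z i)⁻¹) (w j₀) := fun i => (c1 i).neg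
  have c2 : ∀ k ∈ univ.erase j₀, ContinuousAt (fun t : ℂ => (t - w k)⁻¹) (w j₀) :=
    fun k hk => ((continuous_id.sub continuous_const).continuousAt).inv₀ (hww k hk)
  set v : ℂ → V := fun t =>
    -∑ i, (t - z i)⁻¹ • lam i + ∑ k ∈ univ.erase j₀, (t - w k)⁻¹ • alp k with hv
  set v2 : ℂ → V := fun t =>
    ∑ i, ((t - z i) ^ 2)⁻¹ • lam i - ∑ k ∈ univ.erase j₀, ((t - w k) ^ 2)⁻¹ • alp k with hv2
  set q : ℂ → V := fun t =>
    ∑ i, ((t - z i) * (w j₀ - z i))⁻¹ • lam i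
      - ∑ k ∈ univ.erase j₀, ((t - w k) * (w j₀ - w k))⁻¹ • alp k with hq
  set h : ℂ → ℂ := fun t =>
    B (alp j₀) (q t) + (1/2 : ℂ) * B (v t) (v t) + B ρ (v2 t) with hh
  have claim1 : ∀ t : ℂ, (1/2 : ℂ) * B (u t) (u t) + B ρ (u' t)
      = (t - w j₀)⁻¹ * B (alp j₀) (v t) + (1/2 : ℂ) * B (v t) (v t) + B ρ (v2 t) := by
    intro t
    have e1 : u t = (t - w j₀)⁻¹ • alp j₀ + v t := by
      simp only [hu t, hv]
      rw [← Finset.add_sum_erase _ (fun j => (t - w j)⁻¹ • alp j) (Finset.mem_univ j₀)]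
      abel
    have e2 : u' t = -(((t - w j₀) ^ 2)⁻¹ • alp j₀) + v2 t := by
      simp only [hu' t, hv2]
      rw [← Finset.add_sum_erase _ (fun j => ((t - w j) ^ 2)⁻¹ • alp j) (Finset.mem_univ j₀)]
      abel
    rw [e1, e2]
    have hsq : ((t - w j₀) ^ 2)⁻¹ = (t - w j₀)⁻¹ * (t - w j₀)⁻¹ := by rw [sq, mul_inv]
    simp only [map_add, map_neg, map_smul, LinearMap.add_apply, LinearMap.neg_apply,
      LinearMap.smul_apply, smul_eq_mul]
    rw [hsq, hBsymm (v t) (alp j₀), hBsymm ρ (alp j₀)]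
    linear_combination (-((t - w j₀)⁻¹ * (t - w j₀)⁻¹ / 2)) * hρ j₀
  have claim2 : ∀ t : ℂ, (∀ i, t ≠ z i) → (∀ k ∈ univ.erase j₀, t ≠ w k) →
      B (alp j₀) (v t) = G j₀ + (t - w j₀) * B (alp j₀) (q t) := by
    intro t ht1 ht2
    simp only [hv, hq, hG j₀, map_add, map_neg, map_sub, map_sum, map_smul, smul_eq_mul]
    have E1 : ∑ i, (t - z i)⁻¹ * B (alp j₀) (lam i)
        = (∑ i, B (lam i) (alp j₀) / (w j₀ - z i))
          - (t - w j₀) * ∑ i, ((t - z i) * (w j₀ - z i))⁻¹ * B (alp j₀) (lam i) := by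
      rw [Finset.mul_sum, ← Finset.sum_sub_distrib]
      refine Finset.sum_congr rfl fun i _ => ?_
      have hx : t - z i ≠ 0 := sub_ne_zero.mpr (ht1 i)
      have hy := hwz i
      rw [hBsymm (lam i) (alp j₀)]
      field_simp
      ring
    have E2 : ∑ k ∈ univ.erase j₀, (t - w k)⁻¹ * B (alp j₀) (alp k)
        = (∑ k ∈ univ.erase j₀, B (alp k) (alp j₀) / (w j₀ - w k))
          - (t - w j₀) * ∑ k ∈ univ.erase j₀,
              ((t - w k) * (w j₀ - w k))⁻¹ * B (alp j₀) (alp k) := by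
      rw [Finset.mul_sum, ← Finset.sum_sub_distrib]
      refine Finset.sum_congr rfl fun k hk => ?_
      have hx : t - w k ≠ 0 := sub_ne_zero.mpr (ht2 k hk)
      have hy := hww k hk
      rw [hBsymm (alp k) (alp j₀)]
      field_simp
      ring
    linear_combination E2 - E1
  have claim3 : ContinuousAt h (w j₀) := by
    have C1 : ContinuousAt (fun t => B (alp j₀) (q t)) (w j₀) := by
      simp only [hq, map_sub]
      exact (auxB1 B (alp j₀) univ _ lam (w j₀) fun i _ => c1q i).sub
        (auxB1 B (alp j₀) (univ.erase j₀) _ alp (w j₀) c2q)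
    have C2 : ContinuousAt (fun t => B (v t) (v t)) (w j₀) := by
      have hv' : v = fun t =>
          (∑ i, (-(t - z i)⁻¹) • lam i) + ∑ k ∈ univ.erase j₀, (t - w k)⁻¹ • alp k := by
        rw [hv]; funext t; rw [← Finset.sum_neg_distrib]
        simp [neg_smul]
      simp only [hv', map_add, LinearMap.add_apply]
      exact ((auxB B univ univ _ _ lam lam (w j₀) (fun i _ => c1n i) (fun i _ => c1n i)).add
        (auxB B (univ.erase j₀) univ _ _ alp lam (w j₀) c2 (fun i _ => c1n i))).add
        ((auxB B univ (univ.erase j₀) _ _ lam alp (w j₀) (fun i _ => c1n i) c2).add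
        (auxB B (univ.erase j₀) (univ.erase j₀) _ _ alp alp (w j₀) c2 c2))
    have C3 : ContinuousAt (fun t => B ρ (v2 t)) (w j₀) := by
      simp only [hv2, map_sub]
      exact (auxB1 B ρ univ _ lam (w j₀) fun i _ => c1s i).sub
        (auxB1 B ρ (univ.erase j₀) _ alp (w j₀) c2s)
    rw [hh]
    exact (C1.add (continuousAt_const.mul C2)).add C3
  have hevent : ∀ᶠ t in 𝓝[≠] (w j₀), (∀ i, t ≠ z i) ∧ (∀ k ∈ univ.erase j₀, t ≠ w k) := by
    apply eventually_nhdsWithin_of_eventually_nhds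
    refine Eventually.and ?_ ?_
    · exact eventually_all.mpr fun i => eventually_ne_nhds (Ne.symm (hzw i j₀))
    · exact (eventually_all_finset _).mpr fun k hk =>
        eventually_ne_nhds fun hc => (Finset.mem_erase.mp hk).1 (hw hc).symm
  have hev : (fun t => (1/2 : ℂ) * B (u t) (u t) + B ρ (u' t))
      =ᶠ[𝓝[≠] (w j₀)] fun t => G j₀ * (t - w j₀)⁻¹ + h t := by
    filter_upwards [hevent, self_mem_nhdsWithin] with t hts htne
    have hx : t - w j₀ ≠ 0 := sub_ne_zero.mpr htne
    rw [claim1 t, claim2 t hts.1 hts.2]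
    simp only [hh]
    field_simp
    ring
  have hh' : Tendsto h (𝓝[≠] (w j₀)) (𝓝 (h (w j₀))) :=
    claim3.tendsto.mono_left nhdsWithin_le_nhds
  constructor
  · rintro ⟨L, hL⟩
    have h1 : Tendsto (fun t => G j₀ * (t - w j₀)⁻¹) (𝓝[≠] (w j₀)) (𝓝 (L - h (w j₀))) := by
      refine (hL.sub hh').congr' ?_
      filter_upwards [hev] with t ht
      rw [ht]; ring
    have h3 : Tendsto (fun t : ℂ => t - w j₀) (𝓝[≠] (w j₀)) (𝓝 0) := by
      have h3' : Tendsto (fun t : ℂ => t - w j₀) (𝓝 (w j₀)) (𝓝 (w j₀ - w j₀)) :=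
        (continuous_id.sub continuous_const).tendsto (w j₀)
      rw [sub_self] at h3'
      exact h3'.mono_left nhdsWithin_le_nhds
    have h5 : Tendsto (fun _ : ℂ => G j₀) (𝓝[≠] (w j₀)) (𝓝 ((L - h (w j₀)) * 0)) := by
      refine (h1.mul h3).congr' ?_
      filter_upwards [self_mem_nhdsWithin] with t htne
      have hx : t - w j₀ ≠ 0 := sub_ne_zero.mpr htne
      field_simp
    have := tendsto_nhds_unique h5 tendsto_const_nhds
    simpa using this.symm
  · intro hG0
    refine ⟨h (w j₀), Tendsto.congr' ?_ hh'⟩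
    filter_upwards [hev] with t ht
    rw [ht, hG0, zero_mul, zero_add]
end

section
/- Let L be a Lie algebra over ℂ and let p₋, p₊, ρ̄ ∈ L satisfy [p₋, p₊] = −2·ρ̄ and [ρ̄, p₊] = p₊, and let w ∈ L satisfy [p₊, w] = 0. Let V ⊆ ℂ be open and let μ : V → ℂ be three times complex differentiable with μ′(s) ≠ 0 for s ∈ V. Set A(s) := −μ″(s)/μ′(s) and β(s) := μ″(s)/(2·μ′(s)). Then for every s ∈ V: (p₋ + A(s)·ρ̄ + w) + [β(s)·p₊, p₋ + A(s)·ρ̄ + w] + (1/2)·[β(s)·p₊, [β(s)·p₊, p₋ + A(s)·ρ̄ + w]] − β′(s)·p₊ = p₋ + w − (1/2)·(Sμ)(s)·p₊, where Sμ := μ‴/μ′ − (3/2)·(μ″/μ′)² is the Schwarzian derivative of μ. (This is the computation of §6.3 of the paper: in finite types, the further gauge transformation by exp(p̄₁·μ″/(2μ′)) needed after a coordinate change t = μ(s) removes the ρ̄-term from the canonical form of a finite-type oper and shifts the coefficient of p̄₁ by −½Sμ, so that v₁ transforms as a projective connection while the v_i with i > 1 transform as sections of Ω^{i+1}.) -/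
/-!
Under the `sl₂`-relations, `exp(ad(b·p₊))` acts on `p₋ + a·ρ̄ + w` only through the truncated
series `1 + ad + ½ ad²`, and moves the `ρ̄`-coefficient to `a + 2b` and the `p₊`-coefficient to
`-(ab + b²)`. For `a = -μ″/μ′` and `b = β = μ″/(2μ′)` the `ρ̄`-term cancels and `p₊` gets the
coefficient `β²`; since `β` solves the Riccati equation `β′ = β² + ½·Sμ`, subtracting `β′·p₊`
leaves exactly `-½·Sμ·p₊`.
-/

section GaugeTransform

variable {K L : Type*} [Field K] [NeZero (2 : K)] [LieRing L] [LieAlgebra K L]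

theorem gauge_sl2_triple (pm pp ρ w : L) (h1 : ⁅pm, pp⁆ = (-2 : K) • ρ) (h2 : ⁅ρ, pp⁆ = pp)
    (hw : ⁅pp, w⁆ = 0) (a b : K) :
    (pm + a • ρ + w) + ⁅b • pp, pm + a • ρ + w⁆
        + (1/2 : K) • ⁅b • pp, ⁅b • pp, pm + a • ρ + w⁆⁆
      = pm + w + (a + 2 * b) • ρ - (a * b + b ^ 2) • pp := by
  have hpm : ⁅pp, pm⁆ = (2 : K) • ρ := by
    rw [← lie_skew, h1, neg_smul, neg_neg]
  have hρ : ⁅pp, ρ⁆ = -pp := by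
    rw [← lie_skew, h2]
  simp only [lie_add, lie_smul, smul_lie, hpm, hρ, hw, lie_neg, lie_self, smul_zero, smul_neg,
    add_zero, neg_zero, smul_smul]
  match_scalars <;> field_simp; ring

end GaugeTransform

theorem hasDerivAt_half_logDeriv {𝕜 : Type*} [NontriviallyNormedField 𝕜] [NeZero (2 : 𝕜)]
    {f g : 𝕜 → 𝕜} {f' x : 𝕜} (hf : HasDerivAt f f' x) (hg : HasDerivAt g (f x) x)
    (hg0 : g x ≠ 0) :
    HasDerivAt (fun y => f y / (2 * g y))
      ((f x / (2 * g x)) ^ 2 + (1/2 : 𝕜) * (f' / g x - (3/2 : 𝕜) * (f x / g x) ^ 2)) x := by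
  refine (hf.fun_div (hg.const_mul 2) (mul_ne_zero two_ne_zero hg0)).congr_deriv ?_
  field_simp
  ring

theorem statement11_general {L : Type*} [LieRing L] [LieAlgebra ℂ L]
    (pm pp ρ : L) (h1 : ⁅pm, pp⁆ = (-2 : ℂ) • ρ) (h2 : ⁅ρ, pp⁆ = pp)
    (w : L) (hw : ⁅pp, w⁆ = 0)
    (V : Set ℂ)
    (μ' μ'' μ''' : ℂ → ℂ)
    (hμ' : ∀ s ∈ V, HasDerivAt μ' (μ'' s) s)
    (hμ'' : ∀ s ∈ V, HasDerivAt μ'' (μ''' s) s)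
    (hne : ∀ s ∈ V, μ' s ≠ 0)
    (A β β' : ℂ → ℂ)
    (hA : ∀ s, A s = -μ'' s / μ' s)
    (hβ : ∀ s, β s = μ'' s / (2 * μ' s))
    (hβ' : ∀ s ∈ V, HasDerivAt β (β' s) s)
    (S : ℂ → ℂ)
    (hS : ∀ s, S s = μ''' s / μ' s - (3/2 : ℂ) * (μ'' s / μ' s) ^ 2) :
    ∀ s ∈ V,
      (pm + A s • ρ + w) + ⁅β s • pp, pm + A s • ρ + w⁆
        + (1/2 : ℂ) • ⁅β s • pp, ⁅β s • pp, pm + A s • ρ + w⁆⁆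
        - β' s • pp
      = pm + w - ((1/2 : ℂ) * S s) • pp := by
  intro s hs
  have hA2 : A s = -(2 * β s) := by
    rw [hA, hβ]
    field_simp [hne s hs]
  have hRiccati : β' s = β s ^ 2 + (1/2 : ℂ) * S s := by
    have hβfun : β = fun y => μ'' y / (2 * μ' y) := funext hβ
    rw [hβ, hS]
    exact (hβ' s hs).unique (hβfun ▸ hasDerivAt_half_logDeriv (hμ'' s hs) (hμ' s hs) (hne s hs))
  rw [gauge_sl2_triple pm pp ρ w h1 h2 hw, hA2, hRiccati]
  match_scalars <;> ring

/-- The computation of §6.3: for an `sl₂`-triple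
`[p₋,p₊] = -2ρ̄`, `[ρ̄,p₊] = p₊` and `w` with `[p₊,w] = 0`, gauge transforming
`p₋ + A(s)·ρ̄ + w` (where `A = -μ″/μ′`) by `exp(β(s)·p₊)` with `β = μ″/(2μ′)`
removes the `ρ̄`-term and shifts the `p₊`-coefficient by `-½·Sμ`, the Schwarzian
derivative of the coordinate change `μ`. -/
theorem statement11 {L : Type*} [LieRing L] [LieAlgebra ℂ L]
    (pm pp ρ : L) (h1 : ⁅pm, pp⁆ = (-2 : ℂ) • ρ) (h2 : ⁅ρ, pp⁆ = pp)
    (w : L) (hw : ⁅pp, w⁆ = 0)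
    (V : Set ℂ) (hV : IsOpen V)
    (μ μ' μ'' μ''' : ℂ → ℂ)
    (hμ : ∀ s ∈ V, HasDerivAt μ (μ' s) s)
    (hμ' : ∀ s ∈ V, HasDerivAt μ' (μ'' s) s)
    (hμ'' : ∀ s ∈ V, HasDerivAt μ'' (μ''' s) s)
    (hne : ∀ s ∈ V, μ' s ≠ 0)
    (A β β' : ℂ → ℂ)
    (hA : ∀ s, A s = -μ'' s / μ' s)
    (hβ : ∀ s, β s = μ'' s / (2 * μ' s))
    (hβ' : ∀ s ∈ V, HasDerivAt β (β' s) s)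
    (S : ℂ → ℂ)
    (hS : ∀ s, S s = μ''' s / μ' s - (3/2 : ℂ) * (μ'' s / μ' s) ^ 2) :
    ∀ s ∈ V,
      (pm + A s • ρ + w) + ⁅β s • pp, pm + A s • ρ + w⁆
        + (1/2 : ℂ) • ⁅β s • pp, ⁅β s • pp, pm + A s • ρ + w⁆⁆
        - β' s • pp
      = pm + w - ((1/2 : ℂ) * S s) • pp :=
  statement11_general pm pp ρ h1 h2 w hw V μ' μ'' μ''' hμ' hμ'' hne A β β' hA hβ hβ' S hS
end
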